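/- arXiv:1409.2319 — 6 statements merged into one kernel-verified Lean document; each statement's English description precedes it below -/
import Mathlib

section
/- Assume R is F-pure and let 𝔞 be an ideal of R. If 𝔞 is fully Φ(E)-special (that is, for every n ≥ 1, every r ∈ 𝔞 and every e ∈ (0 :_E 𝔞), the element r ⊗ e is zero in R^{(n)} ⊗_R E), then 𝔞 is Φ(E)-special, and an element e of the 0-th component E of Φ(E) satisfies r ⊗ e = 0 in R^{(n)} ⊗_R E for all r ∈ 𝔞 and all n ≥ 0 if and only if e ∈ (0 :_E 𝔞). -/
open TensorProduct IsLocalRing DirectSum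

universe u v

/-! ### Frobenius twists and base change -/

/-- `R` viewed as an algebra over itself via the `n`-th power of the Frobenius
endomorphism; this plays the role of `R^{(n)}` (an `R`-module via `r • s = r ^ p ^ n * s`). -/
def FrobAlg (R : Type u) (p n : ℕ) [CommRing R] [Fact p.Prime] [CharP R p] : Type u := R

namespace FrobAlg

variable (R : Type u) (p n : ℕ) [CommRing R] [Fact p.Prime] [CharP R p]

instance : CommRing (FrobAlg R p n) := inferInstanceAs (CommRing R)

instance : Algebra R (FrobAlg R p n) :=
  RingHom.toAlgebra (show R →+* FrobAlg R p n from (frobenius R p) ^ n)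

/-- The canonical identification of `R` with the underlying set of `R^{(n)}`. -/
def of (r : R) : FrobAlg R p n := r

end FrobAlg

/-- The Frobenius base change `R^{(n)} ⊗_R M` of an `R`-module `M` along the `n`-th
power of the Frobenius endomorphism of `R`. -/
def FrobBC (R : Type u) (p n : ℕ) [CommRing R] [Fact p.Prime] [CharP R p]
    (M : Type v) [AddCommGroup M] [Module R M] : Type (max u v) :=
  FrobAlg R p n ⊗[R] M

namespace FrobBC

variable (R : Type u) (p n : ℕ) [CommRing R] [Fact p.Prime] [CharP R p]
  (M : Type v) [AddCommGroup M] [Module R M]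

noncomputable instance : AddCommGroup (FrobBC R p n M) :=
  inferInstanceAs (AddCommGroup (FrobAlg R p n ⊗[R] M))

/-- The `R`-module structure on `R^{(n)} ⊗_R M` given by multiplication on the first
factor. -/
noncomputable instance : Module R (FrobBC R p n M) :=
  inferInstanceAs (Module (FrobAlg R p n) (FrobAlg R p n ⊗[R] M))

variable {M}

/-- The elementary tensor `r ⊗ m` in `R^{(n)} ⊗_R M`. -/
noncomputable def tmul (r : R) (m : M) : FrobBC R p n M := FrobAlg.of R p n r ⊗ₜ[R] m

end FrobBC

/-- `R` is `F`-pure if for every `R`-module `M` the natural map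
`M → R^{(1)} ⊗_R M`, `m ↦ 1 ⊗ m`, is injective. -/
def IsFPure (R : Type u) (p : ℕ) [CommRing R] [Fact p.Prime] [CharP R p] : Prop :=
  ∀ (M : Type u) [AddCommGroup M] [Module R M],
    Function.Injective fun m : M => FrobBC.tmul R p 1 (1 : R) m

/-- An ideal `𝔞` of `R` is fully `Φ(E)`-special if for every `n ≥ 1`, every `r ∈ 𝔞` and
every `e ∈ (0 :_E 𝔞)`, the element `r ⊗ e` is zero in `R^{(n)} ⊗_R E`. -/
def IsFullyPhiSpecial (R : Type u) (p : ℕ) [CommRing R] [Fact p.Prime] [CharP R p]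
    (E : Type v) [AddCommGroup E] [Module R E] (𝔞 : Ideal R) : Prop :=
  ∀ n : ℕ, 1 ≤ n → ∀ r ∈ 𝔞, ∀ e : E, (∀ a ∈ 𝔞, a • e = 0) → FrobBC.tmul R p n r e = 0

/-! ### The module `Φ(E)` and the Frobenius shift -/

/-- The Frobenius `a ↦ a ^ p`, as an `R`-algebra map `R^{(n)} → R^{(n+1)}`. -/
def frobStepAlg (R : Type u) (p n : ℕ) [CommRing R] [Fact p.Prime] [CharP R p] :
    FrobAlg R p n →ₐ[R] FrobAlg R p (n + 1) :=
  { (show FrobAlg R p n →+* FrobAlg R p (n + 1) from frobenius R p) with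
    commutes' := fun r => by
      show frobenius R p (((frobenius R p) ^ n) r) = ((frobenius R p) ^ (n + 1)) r
      rw [pow_succ']
      rfl }

/-- The Frobenius `a ↦ a ^ p`, as an `R`-linear map `R^{(n)} → R^{(n+1)}`. -/
def frobStep (R : Type u) (p n : ℕ) [CommRing R] [Fact p.Prime] [CharP R p] :
    FrobAlg R p n →ₗ[R] FrobAlg R p (n + 1) :=
  (frobStepAlg R p n).toLinearMap

/-- The graded module `Φ(E) = ⊕_{n ≥ 0} R^{(n)} ⊗_R E`. -/
def PhiModule (R : Type u) (p : ℕ) [CommRing R] [Fact p.Prime] [CharP R p]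
    (E : Type v) [AddCommGroup E] [Module R E] : Type (max u v) :=
  ⨁ n : ℕ, FrobBC R p n E

namespace PhiModule

variable (R : Type u) (p : ℕ) [CommRing R] [Fact p.Prime] [CharP R p]
  (E : Type v) [AddCommGroup E] [Module R E]

noncomputable instance : AddCommGroup (PhiModule R p E) :=
  inferInstanceAs (AddCommGroup (⨁ n : ℕ, FrobBC R p n E))

noncomputable instance : Module R (PhiModule R p E) :=
  inferInstanceAs (Module R (⨁ n : ℕ, FrobBC R p n E))

/-- The inclusion of the `n`-th component into `Φ(E)`. -/
noncomputable def of (n : ℕ) (g : FrobBC R p n E) : PhiModule R p E :=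
  DirectSum.of (fun m : ℕ => FrobBC R p m E) n g

/-- The Frobenius-semilinear shift operator `x` on `Φ(E)`, sending an element
`r ⊗ e` of the `n`-th component to `r ^ p ⊗ e` in the `(n+1)`-th component. -/
noncomputable def shift : PhiModule R p E →+ PhiModule R p E :=
  DirectSum.toAddMonoid fun n =>
    (DirectSum.of (fun m : ℕ => FrobBC R p m E) (n + 1)).comp
      (TensorProduct.map (frobStep R p n) (LinearMap.id (R := R) (M := E))).toAddMonoidHom

end PhiModule

/-- An ideal `𝔞` of `R` is `Φ(E)`-special if it is the annihilator of an
`R[x,f]`-submodule of `Φ(E)`, i.e. of an `R`-submodule stable under the shift operator. -/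
def IsPhiSpecial (R : Type u) (p : ℕ) [CommRing R] [Fact p.Prime] [CharP R p]
    (E : Type v) [AddCommGroup E] [Module R E] (𝔞 : Ideal R) : Prop :=
  ∃ N : Submodule R (PhiModule R p E),
    (∀ g ∈ N, PhiModule.shift R p E g ∈ N) ∧ 𝔞 = N.annihilator

/-! ### Further notions -/

/-- The `q`-th bracket (Frobenius) power `I^{[q]}` of an ideal: the ideal generated by
the `q`-th powers of the elements of `I`. -/
def Ideal.bracketPow {S : Type u} [CommRing S] (I : Ideal S) (q : ℕ) : Ideal S :=
  Ideal.span ((fun x => x ^ q) '' (I : Set S))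

/-- A Noetherian local ring is regular if its maximal ideal can be generated by
`dim S` elements. -/
def IsRegularLocal (S : Type u) [CommRing S] [IsLocalRing S] : Prop :=
  ∃ s : Finset S, (s.card : WithBot (WithTop ℕ)) = ringKrullDim S ∧
    Ideal.span (s : Set S) = maximalIdeal S

/-- An ideal `𝔟` of `R` is uniformly `F`-compatible if for every `n ≥ 1` and every
`R`-linear map `φ : R^{(n)} → R` one has `φ(𝔟) ⊆ 𝔟`. -/
def UniformlyFCompatible (R : Type u) (p : ℕ) [CommRing R] [Fact p.Prime] [CharP R p]
    (𝔟 : Ideal R) : Prop :=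
  ∀ n : ℕ, 1 ≤ n → ∀ φ : FrobAlg R p n →ₗ[R] R, ∀ b ∈ 𝔟, φ (FrobAlg.of R p n b) ∈ 𝔟

/-- `R` is `F`-finite if `R^{(1)}` is a finitely generated `R`-module. -/
def IsFFinite (R : Type u) (p : ℕ) [CommRing R] [Fact p.Prime] [CharP R p] : Prop :=
  Module.Finite R (FrobAlg R p 1)

/-- A Noetherian local ring `T` of characteristic `p` is strongly `F`-regular in the
sense of Lyubeznik and Smith if the tight closure of `0` in the injective envelope of
the residue field of `T` is zero. -/
def IsStronglyFRegularLS (T : Type u) (p : ℕ) [CommRing T] [IsLocalRing T]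
    [Fact p.Prime] [CharP T p] : Prop :=
  ∀ (ET : Type u) [AddCommGroup ET] [Module T ET],
    Module.Injective T ET →
    ∀ ι : (T ⧸ maximalIdeal T) →ₗ[T] ET, Function.Injective ι →
    (∀ N : Submodule T ET, N ⊓ LinearMap.range ι = ⊥ → N = ⊥) →
    ∀ m : ET,
      (∃ c : T, (∀ P ∈ minimalPrimes T, c ∉ P) ∧
        ∃ N₀ : ℕ, ∀ n : ℕ, N₀ ≤ n → FrobBC.tmul T p n c m = 0) → m = 0

/-- `Q` is a minimal primary decomposition of the ideal `𝔄`: the `Q i` are primary,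
`𝔄` is their intersection, their radicals are pairwise distinct, and none of them
contains the intersection of the others. -/
def IsMinimalPrimaryDecomposition {S : Type u} [CommRing S] (𝔄 : Ideal S) {t : ℕ}
    (Q : Fin t → Ideal S) : Prop :=
  𝔄 = ⨅ i, Q i ∧ (∀ i, (Q i).IsPrimary) ∧
    (Function.Injective fun i => (Q i).radical) ∧
    ∀ i, ¬ (⨅ j, ⨅ (_ : j ≠ i), Q j) ≤ Q i

/-! Let `N ⊆ Φ(E)` be the `R[x,f]`-submodule generated by `(0 :_E 𝔞) ⊆ E = Φ(E)₀`; it is spanned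
by the elements `1 ⊗ e`, `e ∈ (0 :_E 𝔞)`, in all degrees. So `r` annihilates `N` iff `r ⊗ e = 0`
in every `R^{(n)} ⊗_R E`: full `Φ(E)`-speciality (degree `0` being automatic) gives `𝔞 ⊆ ann N`,
and degree `0` alone gives `ann N ⊆ ann_R (0 :_E 𝔞) = 𝔞`, the last equality because `E` is an
injective module containing the residue field. -/

section InjectiveHull

variable {R : Type u} [CommRing R] [IsLocalRing R]

/-- The cyclic module `R ∙ x ≅ R ⧸ ann x` surjects onto the residue field, which embeds in `E`;
injectivity of `E` extends this map from `R ∙ x` to `M`. -/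
theorem exists_linearMap_apply_ne_zero {E : Type v} [AddCommGroup E] [Module R E]
    (hE : Module.Injective R E)
    {ι : (R ⧸ maximalIdeal R) →ₗ[R] E} (hι : Function.Injective ι)
    {M : Type v} [AddCommGroup M] [Module R M] {x : M} (hx : x ≠ 0) :
    ∃ ψ : M →ₗ[R] E, ψ x ≠ 0 := by
  have hann : Ideal.torsionOf R M x ≤ maximalIdeal R :=
    le_maximalIdeal fun h => hx ((Ideal.torsionOf_eq_top_iff R x).mp h)
  let φ : (R ∙ x) →ₗ[R] E :=
    ι ∘ₗ Submodule.factor hann ∘ₗ (Ideal.quotTorsionOfEquivSpanSingleton R M x).symm.toLinearMap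
  obtain ⟨ψ, hψ⟩ := hE.out _ (Submodule.injective_subtype _) φ
  refine ⟨ψ, fun hψx => ?_⟩
  have hgen : Ideal.quotTorsionOfEquivSpanSingleton R M x (Submodule.Quotient.mk 1) =
      ⟨x, Submodule.mem_span_singleton_self x⟩ := by
    rw [Ideal.quotTorsionOfEquivSpanSingleton_apply_mk, one_smul]
  have hφx : φ ⟨x, Submodule.mem_span_singleton_self x⟩ = ι (Submodule.Quotient.mk 1) := by
    simp only [φ, LinearMap.comp_apply, LinearEquiv.coe_coe, ← hgen,
      LinearEquiv.symm_apply_apply]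
    rfl
  have hone : (Submodule.Quotient.mk 1 : R ⧸ maximalIdeal R) ≠ 0 := by
    rw [Ne, Submodule.Quotient.mk_eq_zero]
    exact (maximalIdeal.isMaximal R).ne_top ∘ (Ideal.eq_top_iff_one _).mpr
  exact hone (hι (by rw [← hφx, ← hψ, map_zero]; exact hψx))

theorem annihilator_torsionBySet_eq {E : Type u} [AddCommGroup E] [Module R E]
    (hE : Module.Injective R E)
    {ι : (R ⧸ maximalIdeal R) →ₗ[R] E} (hι : Function.Injective ι) (I : Ideal R) :
    (Submodule.torsionBySet R E I).annihilator = I := by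
  refine le_antisymm (fun s hs => ?_)
    ((Submodule.torsion_gc R E _ (OrderDual.toDual I)).mpr le_rfl)
  by_contra hsI
  have hs0 : (Ideal.Quotient.mk I s) ≠ 0 := by rwa [Ne, Ideal.Quotient.eq_zero_iff_mem]
  obtain ⟨ψ, hψ⟩ := exists_linearMap_apply_ne_zero hE hι hs0
  have hmk (a : R) : Ideal.Quotient.mk I a = a • Ideal.Quotient.mk I 1 := by
    rw [Algebra.smul_def, Ideal.Quotient.algebraMap_eq, ← map_mul, mul_one]
  have hψ1 : ψ (Ideal.Quotient.mk I 1) ∈ Submodule.torsionBySet R E I := by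
    refine (Submodule.mem_torsionBySet_iff _ _).mpr fun ⟨a, ha⟩ => ?_
    rw [← map_smul, ← hmk, Ideal.Quotient.eq_zero_iff_mem.mpr ha, map_zero]
  exact hψ (by rw [hmk, map_smul]; exact Submodule.mem_annihilator.mp hs _ hψ1)

end InjectiveHull

section Frobenius

variable {R : Type u} [CommRing R] {p : ℕ} [Fact p.Prime] [CharP R p]

namespace FrobAlg

noncomputable def zeroEquiv : FrobAlg R p 0 ≃ₗ[R] R where
  toFun r := r
  invFun r := r
  map_add' _ _ := rfl
  map_smul' c r := by
    change @HMul.hMul R R R _ (((frobenius R p) ^ 0) c) r = @HMul.hMul R R R _ c r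
    rw [pow_zero]
    rfl
  left_inv _ := rfl
  right_inv _ := rfl

end FrobAlg

namespace FrobBC

variable {M : Type v} [AddCommGroup M] [Module R M]

@[elab_as_elim]
theorem induction_on {n : ℕ} {motive : FrobBC R p n M → Prop} (y : FrobBC R p n M)
    (zero : motive 0) (tmul : ∀ r m, motive (tmul R p n r m))
    (add : ∀ y z, motive y → motive z → motive (y + z)) : motive y :=
  TensorProduct.induction_on y zero tmul add

theorem smul_tmul (n : ℕ) (c r : R) (m : M) : c • tmul R p n r m = tmul R p n (c * r) m :=
  TensorProduct.smul_tmul' (FrobAlg.of R p n c) (FrobAlg.of R p n r) m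

variable (R p M) in
noncomputable def zeroEquiv : FrobBC R p 0 M ≃+ M :=
  ((TensorProduct.congr FrobAlg.zeroEquiv (LinearEquiv.refl R M)).trans
    (TensorProduct.lid R M)).toAddEquiv

theorem zeroEquiv_tmul (r : R) (m : M) : zeroEquiv R p M (tmul R p 0 r m) = r • m :=
  rfl

theorem tmul_zero_eq_zero_iff (r : R) (m : M) : tmul R p 0 r m = 0 ↔ r • m = 0 := by
  rw [← zeroEquiv_tmul, AddEquiv.map_eq_zero_iff]

variable (R p M) in
def frobMap (n : ℕ) : FrobBC R p n M →+ FrobBC R p (n + 1) M :=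
  (TensorProduct.map (frobStep R p n) LinearMap.id).toAddMonoidHom

theorem frobMap_tmul (n : ℕ) (r : R) (m : M) :
    frobMap R p M n (tmul R p n r m) = tmul R p (n + 1) (r ^ p) m :=
  TensorProduct.map_tmul _ _ _ _

theorem frobMap_smul (n : ℕ) (c : R) (y : FrobBC R p n M) :
    frobMap R p M n (c • y) = c ^ p • frobMap R p M n y := by
  induction y using induction_on with
  | zero => rw [smul_zero, map_zero, smul_zero]
  | tmul r m => rw [smul_tmul, frobMap_tmul, frobMap_tmul, smul_tmul, mul_pow]
  | add y z hy hz => rw [smul_add, map_add, hy, hz, map_add, smul_add]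

end FrobBC

namespace PhiModule

variable {E : Type v} [AddCommGroup E] [Module R E]

@[elab_as_elim]
theorem induction_on {motive : PhiModule R p E → Prop} (g : PhiModule R p E)
    (zero : motive 0) (of : ∀ n y, motive (of R p E n y))
    (add : ∀ g h, motive g → motive h → motive (g + h)) : motive g :=
  DirectSum.induction_on g zero of add

theorem of_smul (n : ℕ) (c : R) (y : FrobBC R p n E) : of R p E n (c • y) = c • of R p E n y :=
  DirectSum.of_smul _ _ _ _

theorem of_eq_zero_iff {n : ℕ} {y : FrobBC R p n E} : of R p E n y = 0 ↔ y = 0 :=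
  (DirectSum.of_injective (β := fun m => FrobBC R p m E) n).eq_iff' (map_zero _)

theorem shift_of (n : ℕ) (y : FrobBC R p n E) :
    shift R p E (of R p E n y) = of R p E (n + 1) (FrobBC.frobMap R p E n y) :=
  DirectSum.toAddMonoid_of _ _ _

theorem shift_smul (c : R) (g : PhiModule R p E) : shift R p E (c • g) = c ^ p • shift R p E g := by
  induction g using induction_on with
  | zero => rw [smul_zero, map_zero, smul_zero]
  | of n y => rw [← of_smul, shift_of, shift_of, FrobBC.frobMap_smul, of_smul]
  | add g h hg hh => rw [smul_add, map_add, hg, hh, map_add, smul_add]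

variable (R p) in
/-- The `R[x,f]`-submodule of `Φ(E)` generated by `T ⊆ E = Φ(E)₀`: its elements `1 ⊗ e` in
degree `n` are the `x ^ n e`. -/
noncomputable def frobSpan (T : Set E) : Submodule R (PhiModule R p E) :=
  Submodule.span R {g | ∃ n, ∃ e ∈ T, of R p E n (FrobBC.tmul R p n 1 e) = g}

theorem shift_mem_frobSpan {T : Set E} {g : PhiModule R p E} (hg : g ∈ frobSpan R p T) :
    shift R p E g ∈ frobSpan R p T := by
  induction hg using Submodule.span_induction with
  | mem g hg =>
    obtain ⟨n, e, he, rfl⟩ := hg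
    rw [shift_of, FrobBC.frobMap_tmul, one_pow]
    exact Submodule.subset_span ⟨n + 1, e, he, rfl⟩
  | zero => rw [map_zero]; exact Submodule.zero_mem _
  | add g h _ _ hg hh => rw [map_add]; exact Submodule.add_mem _ hg hh
  | smul c g _ hg => rw [shift_smul]; exact Submodule.smul_mem _ _ hg

theorem mem_annihilator_frobSpan_iff {T : Set E} {r : R} :
    r ∈ (frobSpan R p T).annihilator ↔ ∀ n, ∀ e ∈ T, FrobBC.tmul R p n r e = 0 := by
  simp only [frobSpan, Submodule.mem_annihilator_span, Subtype.forall, Set.mem_ofPred_eq,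
    forall_exists_index, and_imp]
  refine ⟨fun h n e he => ?_, fun h g n e he hg => ?_⟩
  · simpa [← of_smul, FrobBC.smul_tmul, of_eq_zero_iff] using h _ n e he rfl
  · rw [← hg, ← of_smul, FrobBC.smul_tmul, mul_one, h n e he, of_eq_zero_iff]

end PhiModule

theorem IsFullyPhiSpecial.tmul_eq_zero {E : Type v} [AddCommGroup E] [Module R E] {𝔞 : Ideal R}
    (h𝔞 : IsFullyPhiSpecial R p E 𝔞) (n : ℕ) {r : R} (hr : r ∈ 𝔞) {e : E}
    (he : ∀ a ∈ 𝔞, a • e = 0) : FrobBC.tmul R p n r e = 0 := by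
  rcases n with _ | n
  · exact (FrobBC.tmul_zero_eq_zero_iff r e).mpr (he r hr)
  · exact h𝔞 (n + 1) n.succ_pos r hr e he

end Frobenius

theorem fully_special_implies_special_and_component_general (R : Type u) [CommRing R] [IsLocalRing R]
    (p : ℕ) [Fact p.Prime] [CharP R p]
    (E : Type u) [AddCommGroup E] [Module R E]
    (hE : Module.Injective R E)
    (ι : (R ⧸ maximalIdeal R) →ₗ[R] E) (hι : Function.Injective ι)
    (𝔞 : Ideal R) (h𝔞 : IsFullyPhiSpecial R p E 𝔞) :
    IsPhiSpecial R p E 𝔞 ∧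
      ∀ e : E, (∀ n : ℕ, ∀ r ∈ 𝔞, FrobBC.tmul R p n r e = 0) ↔ ∀ a ∈ 𝔞, a • e = 0 := by
  have mem_colon (e : E) : e ∈ Submodule.torsionBySet R E 𝔞 ↔ ∀ a ∈ 𝔞, a • e = 0 := by
    simp
  have component (e : E) :
      (∀ n : ℕ, ∀ r ∈ 𝔞, FrobBC.tmul R p n r e = 0) ↔ ∀ a ∈ 𝔞, a • e = 0 :=
    ⟨fun h a ha => (FrobBC.tmul_zero_eq_zero_iff a e).mp (h 0 a ha),
      fun he n r hr => h𝔞.tmul_eq_zero n hr he⟩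
  refine ⟨⟨PhiModule.frobSpan R p (Submodule.torsionBySet R E 𝔞),
    fun _ => PhiModule.shift_mem_frobSpan, ?_⟩, component⟩
  ext r
  rw [PhiModule.mem_annihilator_frobSpan_iff]
  refine ⟨fun hr n e he => h𝔞.tmul_eq_zero n hr ((mem_colon e).mp he), fun h => ?_⟩
  rw [← annihilator_torsionBySet_eq hE hι 𝔞, Submodule.mem_annihilator]
  exact fun e he => (FrobBC.tmul_zero_eq_zero_iff r e).mp (h 0 e he)

theorem fully_special_implies_special_and_component (R : Type u) [CommRing R] [IsNoetherianRing R] [IsLocalRing R]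
    (p : ℕ) [Fact p.Prime] [CharP R p]
    (E : Type u) [AddCommGroup E] [Module R E]
    (hE : Module.Injective R E)
    (ι : (R ⧸ maximalIdeal R) →ₗ[R] E) (hι : Function.Injective ι)
    (hess : ∀ N : Submodule R E, N ⊓ LinearMap.range ι = ⊥ → N = ⊥)
    (hFpure : IsFPure R p)
    (𝔞 : Ideal R) (h𝔞 : IsFullyPhiSpecial R p E 𝔞) :
    IsPhiSpecial R p E 𝔞 ∧
      ∀ e : E, (∀ n : ℕ, ∀ r ∈ 𝔞, FrobBC.tmul R p n r e = 0) ↔ ∀ a ∈ 𝔞, a • e = 0 :=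
  fully_special_implies_special_and_component_general R p E hE ι hι 𝔞 h𝔞
end

section
/- Suppose R is F-pure and let 𝔞 be a fully Φ(E)-special ideal of R. Then 𝔞 is a radical ideal, and every associated prime of 𝔞 (that is, every associated prime of the R-module R/𝔞) is also fully Φ(E)-special. -/
open TensorProduct IsLocalRing DirectSum

universe u v

/-!
Under `F`-purity a fully `Φ(E)`-special ideal `𝔞` is Frobenius closed: if `s ^ p ∈ 𝔞` but
`s ∉ 𝔞`, injectivity of `E` lifts a nonzero socle element to some `e ∈ (0 :_E 𝔞)` with
`s • e ≠ 0`, while `1 ⊗ s • e = s ^ p ⊗ e` vanishes in `R^{(1)} ⊗ E`. Frobenius closed ideals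
are radical. For `t ∈ R`, injectivity of `E` writes every `e ∈ (0 :_E (𝔞 : t))` as `t • e'`
with `e' ∈ (0 :_E 𝔞)`, and `r ⊗ t • e' = t ^ p ^ n * r ⊗ e'` shows that `(𝔞 : t)` is again
fully `Φ(E)`-special. An associated prime of `𝔞` is (in Mathlib's definition) the radical of
such a colon ideal, hence equal to it.
-/

theorem Module.Injective.exists_linearMap_apply_eq {R : Type u} [Ring R] [Small.{v} R]
    {M : Type*} [AddCommGroup M] [Module R M] {E : Type v} [AddCommGroup E] [Module R E]
    [Module.Injective R E] {x : M} {e : E} (h : ∀ c : R, c • x = 0 → c • e = 0) :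
    ∃ g : M →ₗ[R] E, g x = e := by
  obtain ⟨g, hg⟩ := Module.Injective.extension_property R E _ _ (R ∙ x).subtype
    (Submodule.injective_subtype _) (LinearPMap.mkSpanSingleton' x e h).toFun
  exact ⟨g, (LinearMap.congr_fun hg ⟨x, _⟩).trans
    (LinearPMap.mkSpanSingleton'_apply_self x e h (Submodule.mem_span_singleton_self x))⟩

section

variable {R : Type u} [CommRing R] {p : ℕ} [Fact p.Prime] [CharP R p]

theorem FrobAlg.smul_eq_of_pow_mul (n : ℕ) (s : R) (a : FrobAlg R p n) :
    s • a = FrobAlg.of R p n (s ^ p ^ n) * a := by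
  rw [Algebra.smul_def]
  congr 1
  show ((frobenius R p) ^ n) s = _
  rw [RingHom.coe_pow, iterate_frobenius]
  rfl

theorem FrobBC.tmul_pow_mul {M : Type v} [AddCommGroup M] [Module R M] (n : ℕ) (s r : R)
    (m : M) : FrobBC.tmul R p n (s ^ p ^ n * r) m = FrobBC.tmul R p n r (s • m) := by
  show FrobAlg.of R p n (s ^ p ^ n * r) ⊗ₜ[R] m = FrobAlg.of R p n r ⊗ₜ[R] (s • m)
  rw [← TensorProduct.smul_tmul, FrobAlg.smul_eq_of_pow_mul]
  rfl

variable {E : Type v} [AddCommGroup E] [Module R E]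

theorem Ideal.exists_annihilated_smul_eq [Small.{v} R] [Module.Injective R E] {𝔞 : Ideal R}
    {t : R} {e : E} (h : ∀ c : R, c * t ∈ 𝔞 → c • e = 0) :
    ∃ e' : E, (∀ a ∈ 𝔞, a • e' = 0) ∧ t • e' = e := by
  have mk_smul (c s : R) : c • Ideal.Quotient.mk 𝔞 s = Ideal.Quotient.mk 𝔞 (c * s) := rfl
  obtain ⟨g, hg⟩ := Module.Injective.exists_linearMap_apply_eq (x := Ideal.Quotient.mk 𝔞 t)
    (e := e) fun c hc ↦ h c (Ideal.Quotient.eq_zero_iff_mem.mp (mk_smul c t ▸ hc))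
  refine ⟨g (Ideal.Quotient.mk 𝔞 1), fun a ha ↦ ?_, ?_⟩
  · rw [← map_smul, mk_smul, mul_one, Ideal.Quotient.eq_zero_iff_mem.mpr ha, map_zero]
  · rw [← map_smul, mk_smul, mul_one, hg]

theorem IsFullyPhiSpecial.colon [Small.{v} R] [Module.Injective R E] {𝔞 : Ideal R}
    (h𝔞 : IsFullyPhiSpecial R p E 𝔞) (t : R) : IsFullyPhiSpecial R p E (𝔞.colon {t}) := by
  intro n hn r hr e he
  obtain ⟨e', he'𝔞, rfl⟩ := Ideal.exists_annihilated_smul_eq (𝔞 := 𝔞) (t := t) (e := e)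
    fun c hc ↦ he c (Submodule.mem_colon_singleton.mpr hc)
  have hrt : r * t ∈ 𝔞 := Submodule.mem_colon_singleton.mp hr
  have ht : t ∣ t ^ p ^ n := dvd_pow_self t (pow_ne_zero n (Fact.out : p.Prime).ne_zero)
  have hdvd : r * t ∣ t ^ p ^ n * r := (mul_comm r t).dvd.trans (mul_dvd_mul_right ht r)
  rw [← FrobBC.tmul_pow_mul]
  exact h𝔞 n hn _ (Ideal.mem_of_dvd _ hdvd hrt) e' he'𝔞

theorem IsLocalRing.exists_annihilated_smul_ne_zero [IsLocalRing R] [Small.{v} R]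
    [Module.Injective R E] {e₀ : E} (he₀ : e₀ ≠ 0) (hm : ∀ c ∈ maximalIdeal R, c • e₀ = 0)
    {𝔞 : Ideal R} {r : R} (hr : r ∉ 𝔞) : ∃ e : E, (∀ a ∈ 𝔞, a • e = 0) ∧ r • e ≠ 0 := by
  obtain ⟨e, he𝔞, hre⟩ := Ideal.exists_annihilated_smul_eq (𝔞 := 𝔞) (t := r) (e := e₀)
    fun c hc ↦ hm c fun hcu ↦ hr ((Ideal.unit_mul_mem_iff_mem 𝔞 hcu).mp hc)
  exact ⟨e, he𝔞, hre ▸ he₀⟩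

end

section

variable {R : Type u} [CommRing R] [IsLocalRing R] {p : ℕ} [Fact p.Prime] [CharP R p]
  {E : Type u} [AddCommGroup E] [Module R E] [Module.Injective R E]

theorem IsFullyPhiSpecial.mem_of_pow_mem (hFpure : IsFPure R p) {e₀ : E} (he₀ : e₀ ≠ 0)
    (hm : ∀ c ∈ maximalIdeal R, c • e₀ = 0) {𝔞 : Ideal R} (h𝔞 : IsFullyPhiSpecial R p E 𝔞)
    {s : R} (hs : s ^ p ∈ 𝔞) : s ∈ 𝔞 := by
  by_contra hs𝔞
  obtain ⟨e, he𝔞, hse⟩ := IsLocalRing.exists_annihilated_smul_ne_zero he₀ hm hs𝔞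
  refine hse (hFpure E ?_)
  have hsp : s ^ p ^ 1 * 1 ∈ 𝔞 := by rwa [pow_one, mul_one]
  show FrobBC.tmul R p 1 1 (s • e) = FrobBC.tmul R p 1 1 0
  rw [← FrobBC.tmul_pow_mul, h𝔞 1 le_rfl _ hsp e he𝔞]
  exact (TensorProduct.tmul_zero _ _).symm

theorem IsFullyPhiSpecial.isRadical (hFpure : IsFPure R p) {e₀ : E} (he₀ : e₀ ≠ 0)
    (hm : ∀ c ∈ maximalIdeal R, c • e₀ = 0) {𝔞 : Ideal R} (h𝔞 : IsFullyPhiSpecial R p E 𝔞) :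
    𝔞.IsRadical :=
  (Ideal.isRadical_iff_pow_one_lt p (Fact.out : p.Prime).one_lt).mpr
    fun _ ↦ h𝔞.mem_of_pow_mem hFpure he₀ hm

end

theorem Ideal.colon_bot_singleton_quotient_mk {R : Type*} [CommRing R] (𝔞 : Ideal R) (t : R) :
    (⊥ : Submodule R (R ⧸ 𝔞)).colon {Ideal.Quotient.mk 𝔞 t} = 𝔞.colon {t} := by
  ext c
  rw [Submodule.mem_colon_singleton, Submodule.mem_colon_singleton, Submodule.mem_bot,
    smul_eq_mul, ← Ideal.Quotient.eq_zero_iff_mem]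
  rfl

theorem fully_special_is_radical_and_associated_primes_fully_special_general (R : Type u) [CommRing R] [IsLocalRing R]
    (p : ℕ) [Fact p.Prime] [CharP R p]
    (E : Type u) [AddCommGroup E] [Module R E]
    (hE : Module.Injective R E)
    (ι : (R ⧸ maximalIdeal R) →ₗ[R] E) (hι : Function.Injective ι)
    (hFpure : IsFPure R p)
    (𝔞 : Ideal R) (h𝔞 : IsFullyPhiSpecial R p E 𝔞) :
    𝔞.radical = 𝔞 ∧
      ∀ P ∈ associatedPrimes R (R ⧸ 𝔞), IsFullyPhiSpecial R p E P := by
  have hsocle_ne : ι 1 ≠ 0 := (map_ne_zero_iff ι hι).mpr one_ne_zero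
  have hsocle_ann (c : R) (hc : c ∈ maximalIdeal R) : c • ι 1 = 0 := by
    rw [← map_smul, Algebra.smul_def, mul_one, Ideal.Quotient.algebraMap_eq,
      Ideal.Quotient.eq_zero_iff_mem.mpr hc, map_zero]
  have isRadical {𝔟 : Ideal R} (h𝔟 : IsFullyPhiSpecial R p E 𝔟) : 𝔟.IsRadical :=
    h𝔟.isRadical hFpure hsocle_ne hsocle_ann
  refine ⟨(isRadical h𝔞).radical, ?_⟩
  rintro P ⟨-, x, rfl⟩
  obtain ⟨t, rfl⟩ := Ideal.Quotient.mk_surjective x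
  rw [Ideal.colon_bot_singleton_quotient_mk, (isRadical (h𝔞.colon t)).radical]
  exact h𝔞.colon t

theorem fully_special_is_radical_and_associated_primes_fully_special (R : Type u) [CommRing R] [IsNoetherianRing R] [IsLocalRing R]
    (p : ℕ) [Fact p.Prime] [CharP R p]
    (E : Type u) [AddCommGroup E] [Module R E]
    (hE : Module.Injective R E)
    (ι : (R ⧸ maximalIdeal R) →ₗ[R] E) (hι : Function.Injective ι)
    (hess : ∀ N : Submodule R E, N ⊓ LinearMap.range ι = ⊥ → N = ⊥)
    (hFpure : IsFPure R p)
    (𝔞 : Ideal R) (h𝔞 : IsFullyPhiSpecial R p E 𝔞) :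
    𝔞.radical = 𝔞 ∧
      ∀ P ∈ associatedPrimes R (R ⧸ 𝔞), IsFullyPhiSpecial R p E P :=
  fully_special_is_radical_and_associated_primes_fully_special_general R p E hE ι hι hFpure 𝔞 h𝔞
end

section
/- Suppose R is F-pure and let (𝔞_λ)_{λ ∈ Λ} be a nonempty family of fully Φ(E)-special ideals of R. Then the sum Σ_{λ ∈ Λ} 𝔞_λ is again a fully Φ(E)-special ideal of R. -/
open TensorProduct IsLocalRing DirectSum

universe u v

namespace FrobBC

variable {R : Type u} {p : ℕ} [CommRing R] [Fact p.Prime] [CharP R p]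
  {M : Type v} [AddCommGroup M] [Module R M]

theorem zero_tmul (n : ℕ) (m : M) : tmul R p n 0 m = 0 :=
  TensorProduct.zero_tmul _ m

theorem add_tmul (n : ℕ) (r s : R) (m : M) :
    tmul R p n (r + s) m = tmul R p n r m + tmul R p n s m :=
  TensorProduct.add_tmul (FrobAlg.of R p n r) (FrobAlg.of R p n s) m

theorem tmul_eq_zero_of_mem_iSup {n : ℕ} {Λ : Sort*} {𝔞 : Λ → Ideal R} {r : R} {m : M}
    (hr : r ∈ ⨆ l, 𝔞 l) (h : ∀ l, ∀ a ∈ 𝔞 l, tmul R p n a m = 0) : tmul R p n r m = 0 :=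
  Submodule.iSup_induction (motive := fun x => tmul R p n x m = 0) 𝔞 hr h (zero_tmul n m)
    fun x y hx hy => by rw [add_tmul, hx, hy, add_zero]

end FrobBC

theorem sum_of_fully_special_is_fully_special_general (R : Type u) [CommRing R]
    (p : ℕ) [Fact p.Prime] [CharP R p]
    (E : Type u) [AddCommGroup E] [Module R E]
    (Λ : Type v) (𝔞 : Λ → Ideal R)
    (h𝔞 : ∀ l : Λ, IsFullyPhiSpecial R p E (𝔞 l)) :
    IsFullyPhiSpecial R p E (⨆ l : Λ, 𝔞 l) := by
  intro n hn r hr e he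
  refine FrobBC.tmul_eq_zero_of_mem_iSup hr fun l a ha => h𝔞 l n hn a ha e ?_
  exact fun b hb => he b (Ideal.mem_iSup_of_mem l hb)

theorem sum_of_fully_special_is_fully_special (R : Type u) [CommRing R] [IsNoetherianRing R] [IsLocalRing R]
    (p : ℕ) [Fact p.Prime] [CharP R p]
    (E : Type u) [AddCommGroup E] [Module R E]
    (hE : Module.Injective R E)
    (ι : (R ⧸ maximalIdeal R) →ₗ[R] E) (hι : Function.Injective ι)
    (hess : ∀ N : Submodule R E, N ⊓ LinearMap.range ι = ⊥ → N = ⊥)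
    (hFpure : IsFPure R p)
    (Λ : Type v) [Nonempty Λ] (𝔞 : Λ → Ideal R)
    (h𝔞 : ∀ l : Λ, IsFullyPhiSpecial R p E (𝔞 l)) :
    IsFullyPhiSpecial R p E (⨆ l : Λ, 𝔞 l) :=
  sum_of_fully_special_is_fully_special_general R p E Λ 𝔞 h𝔞
end

section
/- Suppose R is F-pure. Then R has a unique largest fully Φ(E)-special proper ideal, i.e., there is a proper fully Φ(E)-special ideal of R that contains every proper fully Φ(E)-special ideal of R; moreover, this largest fully Φ(E)-special proper ideal is a prime ideal. -/
open TensorProduct IsLocalRing DirectSum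

universe u v

/-! ### Auxiliary lemmas -/

section AuxLemmas

variable {R : Type u} {p : ℕ} [CommRing R] [Fact p.Prime] [CharP R p]
  {E : Type u} [AddCommGroup E] [Module R E]

lemma FrobBC.tmul_add_left (n : ℕ) (a b : R) (e : E) :
    FrobBC.tmul R p n (a + b) e = FrobBC.tmul R p n a e + FrobBC.tmul R p n b e :=
  TensorProduct.add_tmul _ _ _

lemma FrobBC.zero_tmul_left (n : ℕ) (e : E) : FrobBC.tmul R p n 0 e = 0 :=
  TensorProduct.zero_tmul _ _

lemma FrobBC.smul_tmul_left (n : ℕ) (s a : R) (e : E) :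
    s • FrobBC.tmul R p n a e = FrobBC.tmul R p n (s * a) e := by
  have h1 : (FrobAlg.of R p n s) • (FrobAlg.of R p n a ⊗ₜ[R] e)
      = (FrobAlg.of R p n s * FrobAlg.of R p n a) ⊗ₜ[R] e := by
    rw [TensorProduct.smul_tmul', smul_eq_mul]
  exact h1

lemma frobenius_pow_apply (n : ℕ) (s : R) : ((frobenius R p) ^ n) s = s ^ p ^ n := by
  rw [RingHom.coe_pow, ← coe_iterateFrobenius, iterateFrobenius_def]

lemma FrobAlg.pow_smul (n : ℕ) (s a : R) :
    (s • FrobAlg.of R p n a : FrobAlg R p n) = FrobAlg.of R p n (s ^ p ^ n * a) := by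
  have h1 : (s • FrobAlg.of R p n a : FrobAlg R p n)
      = algebraMap R (FrobAlg R p n) s * FrobAlg.of R p n a := Algebra.smul_def s _
  have h2 : algebraMap R (FrobAlg R p n) s = FrobAlg.of R p n (s ^ p ^ n) :=
    frobenius_pow_apply n s
  rw [h1, h2]
  rfl

lemma FrobBC.tmul_smul_right (n : ℕ) (a s : R) (e : E) :
    FrobBC.tmul R p n a (s • e) = FrobBC.tmul R p n (s ^ p ^ n * a) e := by
  show FrobAlg.of R p n a ⊗ₜ[R] (s • e) = FrobAlg.of R p n (s ^ p ^ n * a) ⊗ₜ[R] e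
  rw [← TensorProduct.smul_tmul, FrobAlg.pow_smul]

/-- The zero ideal is fully `Φ(E)`-special. -/
lemma isFullyPhiSpecial_bot : IsFullyPhiSpecial R p E ⊥ := by
  intro n _ r hr e _
  rw [Ideal.mem_bot] at hr
  rw [hr, FrobBC.zero_tmul_left]

/-- The sum of two fully `Φ(E)`-special ideals is fully `Φ(E)`-special. -/
lemma isFullyPhiSpecial_sup {𝔞 𝔟 : Ideal R} (h𝔞 : IsFullyPhiSpecial R p E 𝔞)
    (h𝔟 : IsFullyPhiSpecial R p E 𝔟) : IsFullyPhiSpecial R p E (𝔞 ⊔ 𝔟) := by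
  intro n hn r hr e he
  obtain ⟨a, ha, b, hb, rfl⟩ := Submodule.mem_sup.mp hr
  rw [FrobBC.tmul_add_left,
    h𝔞 n hn a ha e (fun x hx => he x (Ideal.mem_sup_left hx)),
    h𝔟 n hn b hb e (fun x hx => he x (Ideal.mem_sup_right hx)), add_zero]

/-- For an injective module `E`, any element annihilated by `(𝔞 : y)` is a multiple
`y • e'` of an element `e'` annihilated by `𝔞`. -/
lemma exists_smul_of_ann_colon (hE : Module.Injective R E) (𝔞 : Ideal R) (y : R)
    (e : E) (he : ∀ a ∈ 𝔞.colon (Ideal.span {y}), a • e = 0) :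
    ∃ e' : E, (∀ a ∈ 𝔞, a • e' = 0) ∧ y • e' = e := by
  set 𝔟 := 𝔞.colon (Ideal.span {y}) with h𝔟
  -- the multiplication-by-`y` map `R/𝔟 → R/𝔞`
  set mul : R →ₗ[R] R ⧸ 𝔞 := (𝔞.mkQ).comp (LinearMap.toSpanSingleton R R y) with hmuldef
  have hmul_apply : ∀ x : R, mul x = Submodule.Quotient.mk (x * y) := by
    intro x
    show Submodule.mkQ 𝔞 (x • y) = _
    rw [Submodule.mkQ_apply, smul_eq_mul]
  have hmul : 𝔟 ≤ LinearMap.ker mul := by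
    intro x hx
    have hxy : x * y ∈ 𝔞 := Ideal.mem_colon_span_singleton.mp hx
    show mul x = 0
    rw [hmul_apply, Submodule.Quotient.mk_eq_zero]
    exact hxy
  set f : (R ⧸ 𝔟) →ₗ[R] R ⧸ 𝔞 := Submodule.liftQ 𝔟 mul hmul with hfdef
  have hf : Function.Injective f := by
    intro z w hzw
    obtain ⟨x, rfl⟩ := Submodule.Quotient.mk_surjective 𝔟 z
    obtain ⟨x', rfl⟩ := Submodule.Quotient.mk_surjective 𝔟 w
    rw [Submodule.liftQ_apply, Submodule.liftQ_apply, hmul_apply, hmul_apply,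
      Submodule.Quotient.eq] at hzw
    rw [Submodule.Quotient.eq]
    refine Ideal.mem_colon_span_singleton.mpr ?_
    rw [sub_mul]
    exact hzw
  -- the map `R/𝔟 → E` sending `1` to `e`
  set g0 : R →ₗ[R] E := LinearMap.toSpanSingleton R E e with hg0def
  have hg0 : 𝔟 ≤ LinearMap.ker g0 := by
    intro x hx
    show x • e = 0
    exact he x hx
  set g : (R ⧸ 𝔟) →ₗ[R] E := Submodule.liftQ 𝔟 g0 hg0 with hgdef
  obtain ⟨h, hh⟩ := hE.out f hf g
  refine ⟨h (Submodule.Quotient.mk 1), fun a ha => ?_, ?_⟩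
  · rw [← map_smul]
    have h2 : (a • (Submodule.Quotient.mk (1:R) : R ⧸ 𝔞)) = Submodule.Quotient.mk a := by
      rw [← Submodule.Quotient.mk_smul, smul_eq_mul, mul_one]
    rw [h2]
    have h3 : (Submodule.Quotient.mk a : R ⧸ 𝔞) = 0 := (Submodule.Quotient.mk_eq_zero _).mpr ha
    rw [h3, map_zero]
  · rw [← map_smul]
    have h1 : (y • (Submodule.Quotient.mk (1:R) : R ⧸ 𝔞)) = f (Submodule.Quotient.mk 1) := by
      rw [hfdef, Submodule.liftQ_apply, hmul_apply, one_mul,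
        ← Submodule.Quotient.mk_smul, smul_eq_mul, mul_one]
    rw [h1, hh]
    rw [hgdef, Submodule.liftQ_apply]
    show (1 : R) • e = e
    rw [one_smul]

/-- The colon of a fully `Φ(E)`-special ideal by an element is fully `Φ(E)`-special. -/
lemma isFullyPhiSpecial_colon (hE : Module.Injective R E) {𝔞 : Ideal R}
    (h𝔞 : IsFullyPhiSpecial R p E 𝔞) (y : R) :
    IsFullyPhiSpecial R p E (𝔞.colon (Ideal.span {y})) := by
  intro n hn r hr e he
  obtain ⟨e', he'ann, rfl⟩ := exists_smul_of_ann_colon hE 𝔞 y e he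
  have hry : r * y ∈ 𝔞 := Ideal.mem_colon_span_singleton.mp hr
  have hq : y ^ p ^ n * r = y ^ (p ^ n - 1) * (r * y) := by
    have hpn : 1 ≤ p ^ n := Nat.one_le_pow _ _ (Fact.out (p := p.Prime)).pos
    rw [show y ^ (p ^ n - 1) * (r * y) = y ^ (p ^ n - 1) * y * r by ring,
      ← pow_succ, Nat.sub_add_cancel hpn]
  rw [FrobBC.tmul_smul_right, hq, ← FrobBC.smul_tmul_left,
    h𝔞 n hn (r * y) hry e' he'ann, smul_zero]

end AuxLemmas

theorem exists_largest_fully_special_proper_ideal (R : Type u) [CommRing R] [IsNoetherianRing R] [IsLocalRing R]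
    (p : ℕ) [Fact p.Prime] [CharP R p]
    (E : Type u) [AddCommGroup E] [Module R E]
    (hE : Module.Injective R E)
    (ι : (R ⧸ maximalIdeal R) →ₗ[R] E) (hι : Function.Injective ι)
    (hess : ∀ N : Submodule R E, N ⊓ LinearMap.range ι = ⊥ → N = ⊥)
    (hFpure : IsFPure R p) :
    ∃ 𝔠 : Ideal R, 𝔠 ≠ ⊤ ∧ IsFullyPhiSpecial R p E 𝔠 ∧
      (∀ 𝔟 : Ideal R, 𝔟 ≠ ⊤ → IsFullyPhiSpecial R p E 𝔟 → 𝔟 ≤ 𝔠) ∧ 𝔠.IsPrime := by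
  classical
  set S : Set (Ideal R) := {𝔟 | 𝔟 ≠ ⊤ ∧ IsFullyPhiSpecial R p E 𝔟} with hS
  have hbot : (⊥ : Ideal R) ∈ S := ⟨bot_ne_top, isFullyPhiSpecial_bot⟩
  obtain ⟨𝔠, h𝔠S, hmax⟩ :=
    set_has_maximal_iff_noetherian.mpr (inferInstance : IsNoetherian R R) S ⟨⊥, hbot⟩
  have hlarge : ∀ 𝔟 : Ideal R, 𝔟 ≠ ⊤ → IsFullyPhiSpecial R p E 𝔟 → 𝔟 ≤ 𝔠 := by
    intro 𝔟 h𝔟top h𝔟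
    have hsup : 𝔟 ⊔ 𝔠 ∈ S := by
      refine ⟨fun htop => ?_, isFullyPhiSpecial_sup h𝔟 h𝔠S.2⟩
      have hle : 𝔟 ⊔ 𝔠 ≤ maximalIdeal R :=
        sup_le (le_maximalIdeal h𝔟top) (le_maximalIdeal h𝔠S.1)
      rw [htop] at hle
      exact (maximalIdeal.isMaximal R).ne_top (top_le_iff.mp hle)
    have hnlt : ¬ 𝔠 < 𝔟 ⊔ 𝔠 := hmax _ hsup
    have heq : 𝔟 ⊔ 𝔠 = 𝔠 := by
      by_contra hne
      exact hnlt (lt_of_le_of_ne le_sup_right fun h => hne h.symm)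
    calc 𝔟 ≤ 𝔟 ⊔ 𝔠 := le_sup_left
    _ = 𝔠 := heq
  have hprime : Ideal.IsPrime 𝔠 := by
    refine ⟨h𝔠S.1, ?_⟩
    intro x y hxy
    rw [or_iff_not_imp_right]
    intro hy
    have hcolon := isFullyPhiSpecial_colon hE h𝔠S.2 (𝔞 := 𝔠) y
    have hne : 𝔠.colon (Ideal.span {y}) ≠ ⊤ := by
      intro ht
      apply hy
      have h1 : (1 : R) ∈ 𝔠.colon (Ideal.span {y}) := ht ▸ Submodule.mem_top
      simpa using Ideal.mem_colon_span_singleton.mp h1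
    exact hlarge _ hne hcolon (Ideal.mem_colon_span_singleton.mpr hxy)
  exact ⟨𝔠, h𝔠S.1, h𝔠S.2, hlarge, hprime⟩
end

section
/- Suppose R is F-finite and let 𝔟 be an ideal of R. Then 𝔟 is uniformly F-compatible if and only if for every n ≥ 1, every r ∈ 𝔟 and every e ∈ (0 :_E 𝔟), the element r ⊗ e is zero in R^{(n)} ⊗_R E (i.e., if and only if 𝔟 is fully Φ(E)-special). -/
open TensorProduct IsLocalRing DirectSum

universe u v

/-!
For a finitely presented module `M` over `A` and an injective `A`-module `E`, the
Hom-evaluation map `M ⊗ E → Hom(Hom(M, A), E)`, `m ⊗ e ↦ (φ ↦ φ(m) e)`, is injective: it is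
bijective for finite free `M`, and the general case follows from the four lemma applied to a
presentation of `M`, since `Hom(-, E)` is exact. For `M = R^{(n)}`, finite by `F`-finiteness,
this says `r ⊗ e = 0` in `R^{(n)} ⊗ E` iff `φ(r) e = 0` for every `φ : R^{(n)} → R`. Hence
`𝔟` is fully `Φ(E)`-special iff every `φ(𝔟)` annihilates `(0 :_E 𝔟)`, and the annihilator
of `(0 :_E 𝔟)` is `𝔟` itself because `E` is injective and contains the residue field.
-/

open LinearMap

theorem RingHom.Finite.pow {R : Type*} [CommRing R] {f : R →+* R} (hf : f.Finite) (n : ℕ) :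
    (f ^ n).Finite := by
  induction n with
  | zero => exact RingHom.Finite.id R
  | succ n ih => rw [pow_succ]; exact ih.comp hf

theorem FrobAlg.finite_of_isFFinite (R : Type u) (p : ℕ) [CommRing R] [Fact p.Prime] [CharP R p]
    (hFF : IsFFinite R p) (n : ℕ) : Module.Finite R (FrobAlg R p n) :=
  have hF : ((frobenius R p) ^ 1).Finite := hFF
  (pow_one (frobenius R p) ▸ hF).pow n

theorem Module.Injective.exact_lcomp {A : Type u} [CommRing A] (E : Type v) [AddCommGroup E]
    [Module A E] [Small.{v} A] [Module.Injective A E] {X Y Z : Type*} [AddCommGroup X]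
    [AddCommGroup Y] [AddCommGroup Z] [Module A X] [Module A Y] [Module A Z]
    {f : X →ₗ[A] Y} {g : Y →ₗ[A] Z} (hfg : Function.Exact f g) :
    Function.Exact (lcomp A E g) (lcomp A E f) := by
  -- `h` kills `range f = ker g`, so it factors through `range g`; extend along `range g ↪ Z`.
  have hfg' : Function.Exact f g.rangeRestrict :=
    (Submodule.injective_subtype (range g)).comp_exact_iff_exact.mp hfg
  intro h
  refine ⟨fun hh => ?_, ?_⟩
  · obtain ⟨k₀, hk₀⟩ := (exact_lcomp_of_exact_of_surjective E hfg' g.surjective_rangeRestrict h).mp hh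
    obtain ⟨k, hk⟩ := Module.Injective.extension_property A E _ _ (range g).subtype
      (Submodule.injective_subtype _) k₀
    exact ⟨k, by rw [← hk₀, ← hk]; rfl⟩
  · rintro ⟨k, rfl⟩
    simp only [lcomp_apply', comp_assoc, hfg.linearMap_comp_eq_zero, comp_zero]

section HomEvaluation

variable {A : Type u} [CommRing A] (E : Type v) [AddCommGroup E] [Module A E]

variable (A) in
noncomputable def tensorToHomDual (M : Type*) [AddCommGroup M] [Module A M] :
    M ⊗[A] E →ₗ[A] Module.Dual A M →ₗ[A] E :=
  dualTensorHom A (Module.Dual A M) E ∘ₗ rTensor E (Module.Dual.eval A M)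

variable {E} {M N : Type*} [AddCommGroup M] [Module A M] [AddCommGroup N] [Module A N]

@[simp] theorem tensorToHomDual_tmul (m : M) (e : E) (φ : Module.Dual A M) :
    tensorToHomDual A E M (m ⊗ₜ e) φ = φ m • e := by
  simp [tensorToHomDual]

theorem lcomp_comp_tensorToHomDual (f : M →ₗ[A] N) :
    lcomp A E (lcomp A A f) ∘ₗ tensorToHomDual A E M = tensorToHomDual A E N ∘ₗ rTensor E f := by
  ext m e φ
  simp

theorem tensorToHomDual_bijective [Module.Free A M] [Module.Finite A M] :
    Function.Bijective (tensorToHomDual A E M) :=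
  (dualTensorHom_bijective (R := A) (M := Module.Dual A M) (N := E)).comp
    (LinearEquiv.rTensor E (Module.evalEquiv A M)).bijective

theorem tensorToHomDual_injective [Small.{v} A] [Module.Injective A E] [Module.FinitePresentation A M] :
    Function.Injective (tensorToHomDual A E M) := by
  -- Four lemma on a presentation `A^m → A^n → M → 0`: the bottom row
  -- `Hom((A^m)*, E) → Hom((A^n)*, E) → Hom(M*, E)` is exact since `Hom(-, A)` is left exact
  -- and `Hom(-, E)` is exact.
  obtain ⟨n, m, g, f, hg, hfg⟩ := Module.FinitePresentation.exists_fin' A M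
  exact injective_of_surjective_of_injective_of_right_exact (rTensor E f) (rTensor E g)
    (lcomp A E (lcomp A A f)) (lcomp A E (lcomp A A g)) (tensorToHomDual A E _)
    (tensorToHomDual A E _) (tensorToHomDual A E M) (lcomp_comp_tensorToHomDual f)
    (lcomp_comp_tensorToHomDual g) (rTensor_exact E hfg hg)
    (Module.Injective.exact_lcomp E (exact_lcomp_of_exact_of_surjective A hfg hg))
    tensorToHomDual_bijective.2 tensorToHomDual_bijective.1 (rTensor_surjective E hg)

end HomEvaluation

theorem IsLocalRing.exists_smul_ne_zero_of_notMem {R : Type u} [CommRing R] [IsLocalRing R]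
    {E : Type v} [AddCommGroup E] [Module R E] [Small.{v} R] [Module.Injective R E]
    (ι : (R ⧸ maximalIdeal R) →ₗ[R] E) (hι : Function.Injective ι) {𝔟 : Ideal R} {a : R}
    (ha : a ∉ 𝔟) : ∃ e : E, (∀ x ∈ 𝔟, x • e = 0) ∧ a • e ≠ 0 := by
  set ā : R ⧸ 𝔟 := Submodule.Quotient.mk a
  have hā : ā ≠ 0 := fun h => ha ((Submodule.Quotient.mk_eq_zero 𝔟).mp h)
  have htors : Ideal.torsionOf R _ ā ≤ maximalIdeal R :=
    le_maximalIdeal ((Ideal.torsionOf_eq_top_iff R ā).not.mpr hā)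
  -- `R ∙ ā ≅ R ⧸ ann(ā) ↠ R ⧸ 𝔪 ↪ E`, extended to `R ⧸ 𝔟`; the image of `1` is the witness.
  let ψ : (R ∙ ā) →ₗ[R] E :=
    ι ∘ₗ Submodule.factor htors ∘ₗ (Ideal.quotTorsionOfEquivSpanSingleton R _ ā).symm
  obtain ⟨h, hh⟩ := Module.Injective.extension_property R E _ _ (R ∙ ā).subtype
    (Submodule.injective_subtype _) ψ
  refine ⟨h (Submodule.Quotient.mk 1), fun x hx => ?_, ?_⟩
  · rw [← map_smul, ← Submodule.Quotient.mk_smul, smul_eq_mul, mul_one,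
      (Submodule.Quotient.mk_eq_zero 𝔟).mpr hx, map_zero]
  · have hā_gen : (Ideal.quotTorsionOfEquivSpanSingleton R _ ā).symm
        ⟨ā, Submodule.mem_span_singleton_self ā⟩ = Submodule.Quotient.mk 1 := by
      rw [LinearEquiv.symm_apply_eq, Ideal.quotTorsionOfEquivSpanSingleton_apply_mk, one_smul]
    have : a • h (Submodule.Quotient.mk 1) = ι (Submodule.Quotient.mk 1) :=
      calc a • h (Submodule.Quotient.mk 1) = h ā := by
            rw [← map_smul, ← Submodule.Quotient.mk_smul, smul_eq_mul, mul_one]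
        _ = ψ ⟨ā, Submodule.mem_span_singleton_self ā⟩ := LinearMap.congr_fun hh ⟨ā, _⟩
        _ = ι (Submodule.Quotient.mk 1) := by
            simp only [ψ, comp_apply, LinearEquiv.coe_coe, hā_gen]
            rfl
    rw [this, Ne, map_eq_zero_iff ι hι]
    exact one_ne_zero

theorem uniformly_F_compatible_iff_fully_special_general (R : Type u) [CommRing R] [IsNoetherianRing R] [IsLocalRing R]
    (p : ℕ) [Fact p.Prime] [CharP R p]
    (E : Type u) [AddCommGroup E] [Module R E]
    (hE : Module.Injective R E)
    (ι : (R ⧸ maximalIdeal R) →ₗ[R] E) (hι : Function.Injective ι)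
    (hFF : IsFFinite R p) (𝔟 : Ideal R) :
    UniformlyFCompatible R p 𝔟 ↔ IsFullyPhiSpecial R p E 𝔟 := by
  have hθ (n : ℕ) : Function.Injective (tensorToHomDual R E (FrobAlg R p n)) := by
    have := FrobAlg.finite_of_isFFinite R p hFF n
    have := Module.finitePresentation_of_finite R (FrobAlg R p n)
    exact tensorToHomDual_injective
  constructor
  · intro hUF n hn r hr e he
    apply hθ n
    ext φ
    exact he _ (hUF n hn φ r hr)
  · intro hFS n hn φ b hb
    by_contra hφb
    obtain ⟨e, he, hφbe⟩ := IsLocalRing.exists_smul_ne_zero_of_notMem ι hι hφb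
    apply hφbe
    have hbe : FrobAlg.of R p n b ⊗ₜ[R] e = 0 := hFS n hn b hb e he
    simpa using LinearMap.congr_fun (congrArg (tensorToHomDual R E _) hbe) φ

theorem uniformly_F_compatible_iff_fully_special (R : Type u) [CommRing R] [IsNoetherianRing R] [IsLocalRing R]
    (p : ℕ) [Fact p.Prime] [CharP R p]
    (E : Type u) [AddCommGroup E] [Module R E]
    (hE : Module.Injective R E)
    (ι : (R ⧸ maximalIdeal R) →ₗ[R] E) (hι : Function.Injective ι)
    (hess : ∀ N : Submodule R E, N ⊓ LinearMap.range ι = ⊥ → N = ⊥)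
    (hFF : IsFFinite R p) (𝔟 : Ideal R) :
    UniformlyFCompatible R p 𝔟 ↔ IsFullyPhiSpecial R p E 𝔟 :=
  uniformly_F_compatible_iff_fully_special_general R p E hE ι hι hFF 𝔟
end

section
/- Suppose R is F-finite and let R̂ be the 𝔪-adic completion of R. If 𝔆 is a uniformly F-compatible ideal of R̂, then the contraction 𝔆 ∩ R is a uniformly F-compatible ideal of R. -/
open TensorProduct IsLocalRing DirectSum

universe u v

/-!
An `R`-linear map `φ : R^{(n)} → R` is an additive map with `φ (a ^ q * t) = a * φ t`
(`q = p ^ n`), so it sends the bracket power `I^{[q]}` into `I`. As `𝔪` is finitely generated,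
`𝔪 ^ c ⊆ 𝔪^{[q]}` for some `c`, whence `φ (𝔪 ^ (c * k)) ⊆ 𝔪 ^ k`: `φ` is `𝔪`-adically
continuous. Since `R` is dense in the complete ring `R̂`, `φ` extends by continuity to an
additive `ψ : R̂ → R̂` with the same semilinearity, i.e. to an `R̂`-linear map `R̂^{(n)} → R̂`.
For `b ∈ 𝔆 ∩ R` we then get `φ b = ψ b ∈ 𝔆`.
-/

namespace FrobAlg

variable {R : Type u} {p n : ℕ} [CommRing R] [Fact p.Prime] [CharP R p]

theorem smul_of (a t : R) : a • of R p n t = of R p n (a ^ p ^ n * t) := by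
  change (frobenius R p ^ n) a * t = a ^ p ^ n * t
  rw [RingHom.coe_pow, iterate_frobenius]

theorem map_of_pow_mul (φ : FrobAlg R p n →ₗ[R] R) (a t : R) :
    φ (of R p n (a ^ p ^ n * t)) = a * φ (of R p n t) := by
  rw [← smul_of, map_smul, smul_eq_mul]

def linearMapOfPowMul (ψ : R →+ R) (hψ : ∀ t x, ψ (t ^ p ^ n * x) = t * ψ x) :
    FrobAlg R p n →ₗ[R] R where
  toFun x := ψ x
  map_add' := ψ.map_add
  map_smul' t x := (congrArg ψ (smul_of t x)).trans (hψ t x)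

end FrobAlg

namespace Ideal

variable {S : Type u} [CommRing S]

theorem le_radical_bracketPow (I : Ideal S) (q : ℕ) : I ≤ (I.bracketPow q).radical :=
  fun x hx => ⟨q, subset_span ⟨x, hx, rfl⟩⟩

theorem bracketPow_mul_le (I J : Ideal S) (q : ℕ) :
    I.bracketPow q * J.bracketPow q ≤ (I * J).bracketPow q := by
  rw [bracketPow, bracketPow, span_mul_span']
  refine span_mono ?_
  rintro _ ⟨_, ⟨a, ha, rfl⟩, _, ⟨b, hb, rfl⟩, rfl⟩
  exact ⟨a * b, mul_mem_mul ha hb, mul_pow a b q⟩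

theorem bracketPow_pow_le (I : Ideal S) (q k : ℕ) :
    I.bracketPow q ^ k ≤ (I ^ k).bracketPow q := by
  induction k with
  | zero =>
    rw [pow_zero, pow_zero, one_eq_top, top_le_iff, eq_top_iff_one]
    exact subset_span ⟨1, trivial, one_pow q⟩
  | succ k ih =>
    rw [pow_succ, pow_succ]
    exact (mul_mono_left ih).trans (bracketPow_mul_le _ _ q)

end Ideal

section PowSemilinear

variable {S : Type u} [CommRing S] {q : ℕ} {f : S →+ S}

theorem map_mem_of_mem_bracketPow (hf : ∀ a t, f (a ^ q * t) = a * f t) (I : Ideal S) {x : S}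
    (hx : x ∈ I.bracketPow q) : f x ∈ I := by
  suffices ∀ r, f (r * x) ∈ I by simpa using this 1
  induction hx using Submodule.span_induction with
  | mem x hx =>
    obtain ⟨a, ha, rfl⟩ := hx
    intro r
    rw [mul_comm, hf]
    exact I.mul_mem_right _ ha
  | zero => simp
  | add x y _ _ hx hy => simpa only [mul_add, map_add] using fun r => I.add_mem (hx r) (hy r)
  | smul c x _ hx =>
    intro r
    rw [smul_eq_mul, ← mul_assoc]
    exact hx (r * c)

theorem exists_map_mem_pow_of_mem_pow_mul (hf : ∀ a t, f (a ^ q * t) = a * f t) {I : Ideal S}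
    (hI : I.FG) :
    ∃ c, ∀ k, ∀ s ∈ I ^ (c * k), f s ∈ I ^ k := by
  obtain ⟨c, hc⟩ := Ideal.exists_pow_le_of_le_radical_of_fg (I.le_radical_bracketPow q) hI
  refine ⟨c, fun k s hs => map_mem_of_mem_bracketPow hf _ (I.bracketPow_pow_le q k ?_)⟩
  rw [pow_mul] at hs
  exact Ideal.pow_right_mono hc k hs

end PowSemilinear

namespace Ideal

variable {R S : Type*} [CommRing R] [CommRing S] {f : R →+* S} {I : Ideal R} {K : Ideal S}
  {H : I ≤ K.comap f}

theorem exists_sub_mem_of_quotientMap_surjective (h : Function.Surjective (quotientMap K f H))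
    (x : S) : ∃ r, x - f r ∈ K := by
  obtain ⟨y, hy⟩ := h (Quotient.mk K x)
  obtain ⟨r, rfl⟩ := Quotient.mk_surjective y
  rw [quotientMap_mk, Quotient.eq] at hy
  exact ⟨r, sub_mem_comm_iff.1 hy⟩

theorem mem_of_quotientMap_injective (h : Function.Injective (quotientMap K f H)) {r : R}
    (hr : f r ∈ K) : r ∈ I := by
  rw [← Quotient.eq_zero_iff_mem]
  exact h (by rwa [quotientMap_mk, map_zero, Quotient.eq_zero_iff_mem])

end Ideal

section AdicExtension

variable {R S : Type*} [CommRing R] [CommRing S] [Algebra R S]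

/-- `y` is the limit of `algebraMap R S (f s)` as `algebraMap R S s` tends to `x`, measured
with the modulus of continuity `s ∈ I ^ (c * k) → f s ∈ I ^ k` of `f`. -/
def IsAdicLimit (I : Ideal R) (f : R →+ R) (c : ℕ) (x y : S) : Prop :=
  ∀ k (s : R), x - algebraMap R S s ∈ I.map (algebraMap R S) ^ (c * k) →
    y - algebraMap R S (f s) ∈ I.map (algebraMap R S) ^ k

variable {I : Ideal R} {f : R →+ R} {c : ℕ}

theorem algebraMap_map_sub_mem
    (hclosed : ∀ s k, algebraMap R S s ∈ I.map (algebraMap R S) ^ k → s ∈ I ^ k)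
    (hf : ∀ k, ∀ s ∈ I ^ (c * k), f s ∈ I ^ k) {x : S} {s s' : R} {k : ℕ}
    (hs : x - algebraMap R S s ∈ I.map (algebraMap R S) ^ (c * k))
    (hs' : x - algebraMap R S s' ∈ I.map (algebraMap R S) ^ (c * k)) :
    algebraMap R S (f s) - algebraMap R S (f s') ∈ I.map (algebraMap R S) ^ k := by
  have hss' : s - s' ∈ I ^ (c * k) :=
    hclosed _ _ (by simpa only [map_sub, sub_sub_sub_cancel_left] using sub_mem hs' hs)
  rw [← map_sub, ← map_sub, ← Ideal.map_pow]
  exact Ideal.mem_map_of_mem _ (hf k _ hss')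

theorem IsAdicLimit.eq
    (hdense : ∀ (x : S) k, ∃ s : R, x - algebraMap R S s ∈ I.map (algebraMap R S) ^ k)
    (hH : IsHausdorff (I.map (algebraMap R S)) S) {x y y' : S}
    (hy : IsAdicLimit I f c x y) (hy' : IsAdicLimit I f c x y') : y = y' := by
  refine sub_eq_zero.1 (hH.haus _ fun k => ?_)
  rw [SModEq.sub_mem, sub_zero, smul_eq_mul, Ideal.mul_top]
  obtain ⟨s, hs⟩ := hdense x (c * k)
  simpa only [sub_sub_sub_cancel_right] using sub_mem (hy k s hs) (hy' k s hs)

theorem exists_isAdicLimit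
    (hdense : ∀ (x : S) k, ∃ s : R, x - algebraMap R S s ∈ I.map (algebraMap R S) ^ k)
    (hclosed : ∀ s k, algebraMap R S s ∈ I.map (algebraMap R S) ^ k → s ∈ I ^ k)
    (hP : IsPrecomplete (I.map (algebraMap R S)) S)
    (hf : ∀ k, ∀ s ∈ I ^ (c * k), f s ∈ I ^ k) (x : S) : ∃ y, IsAdicLimit I f c x y := by
  choose g hg using fun k => hdense x (c * k)
  obtain ⟨L, hL⟩ := hP.prec (f := fun k => algebraMap R S (f (g k))) fun {m n} hmn => by
    rw [SModEq.sub_mem, smul_eq_mul, Ideal.mul_top]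
    exact algebraMap_map_sub_mem hclosed hf (hg m)
      (Ideal.pow_le_pow_right (Nat.mul_le_mul_left c hmn) (hg n))
  refine ⟨L, fun k s hs => ?_⟩
  have hLk := hL k
  rw [SModEq.sub_mem, smul_eq_mul, Ideal.mul_top] at hLk
  simpa only [sub_sub_sub_cancel_left] using
    sub_mem (algebraMap_map_sub_mem hclosed hf (hg k) hs) hLk

theorem isAdicLimit_algebraMap
    (hclosed : ∀ s k, algebraMap R S s ∈ I.map (algebraMap R S) ^ k → s ∈ I ^ k)
    (hf : ∀ k, ∀ s ∈ I ^ (c * k), f s ∈ I ^ k) (s : R) :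
    IsAdicLimit I f c (algebraMap R S s) (algebraMap R S (f s)) :=
  fun _ _ hs' => algebraMap_map_sub_mem hclosed hf (by rw [sub_self]; exact zero_mem _) hs'

theorem IsAdicLimit.add
    (hdense : ∀ (x : S) k, ∃ s : R, x - algebraMap R S s ∈ I.map (algebraMap R S) ^ k)
    {x x' y y' : S} (hy : IsAdicLimit I f c x y) (hy' : IsAdicLimit I f c x' y') :
    IsAdicLimit I f c (x + x') (y + y') := by
  intro k s hs
  obtain ⟨s₁, hs₁⟩ := hdense x (c * k)
  have hs₂ : x' - algebraMap R S (s - s₁) ∈ I.map (algebraMap R S) ^ (c * k) := by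
    convert sub_mem hs hs₁ using 1
    rw [map_sub]
    ring
  convert add_mem (hy k s₁ hs₁) (hy' k _ hs₂) using 1
  rw [map_sub, map_sub]
  ring

theorem IsAdicLimit.pow_mul
    (hdense : ∀ (x : S) k, ∃ s : R, x - algebraMap R S s ∈ I.map (algebraMap R S) ^ k)
    (hclosed : ∀ s k, algebraMap R S s ∈ I.map (algebraMap R S) ^ k → s ∈ I ^ k)
    (hf : ∀ k, ∀ s ∈ I ^ (c * k), f s ∈ I ^ k) {q : ℕ} (hq : ∀ a t, f (a ^ q * t) = a * f t)
    {x y : S} (hy : IsAdicLimit I f c x y) (t : S) :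
    IsAdicLimit I f c (t ^ q * x) (t * y) := by
  intro k s hs
  set J := I.map (algebraMap R S)
  obtain ⟨u, hu⟩ := hdense t (c * k + k)
  obtain ⟨s₀, hs₀⟩ := hdense x (c * k)
  have hpow : t ^ q - algebraMap R S u ^ q ∈ J ^ (c * k) := by
    obtain ⟨d, hd⟩ := sub_dvd_pow_sub_pow t (algebraMap R S u) q
    rw [hd]
    exact Ideal.mul_mem_right _ _ (J.pow_le_pow_right (Nat.le_add_right _ _) hu)
  have happrox : t ^ q * x - algebraMap R S (u ^ q * s₀) ∈ J ^ (c * k) := by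
    have e : t ^ q * x - algebraMap R S (u ^ q * s₀) = t ^ q * (x - algebraMap R S s₀) +
        (t ^ q - algebraMap R S u ^ q) * algebraMap R S s₀ := by
      rw [map_mul, map_pow]
      ring
    rw [e]
    exact add_mem (Ideal.mul_mem_left _ _ hs₀) (Ideal.mul_mem_right _ _ hpow)
  have hcomp := algebraMap_map_sub_mem hclosed hf happrox hs
  rw [hq, map_mul] at hcomp
  have e : t * y - algebraMap R S (f s) = t * (y - algebraMap R S (f s₀)) +
      (t - algebraMap R S u) * algebraMap R S (f s₀) +
      (algebraMap R S u * algebraMap R S (f s₀) - algebraMap R S (f s)) := by ring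
  rw [e]
  refine add_mem (add_mem (Ideal.mul_mem_left _ _ (hy k s₀ hs₀)) ?_) hcomp
  exact Ideal.mul_mem_right _ _ (J.pow_le_pow_right (Nat.le_add_left _ _) hu)

theorem exists_addMonoidHom_extension_pow_mul
    (hquot : ∀ k, Function.Bijective
      (Ideal.quotientMap ((I ^ k).map (algebraMap R S)) (algebraMap R S) Ideal.le_comap_map))
    (hcomplete : IsAdicComplete (I.map (algebraMap R S)) S)
    (hf : ∀ k, ∀ s ∈ I ^ (c * k), f s ∈ I ^ k) {q : ℕ} (hq : ∀ a t, f (a ^ q * t) = a * f t) :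
    ∃ ψ : S →+ S, (∀ s, ψ (algebraMap R S s) = algebraMap R S (f s)) ∧
      ∀ t x, ψ (t ^ q * x) = t * ψ x := by
  have hdense (x : S) (k : ℕ) : ∃ s, x - algebraMap R S s ∈ I.map (algebraMap R S) ^ k := by
    simpa only [Ideal.map_pow] using
      Ideal.exists_sub_mem_of_quotientMap_surjective (hquot k).2 x
  have hclosed (s : R) (k : ℕ) (hs : algebraMap R S s ∈ I.map (algebraMap R S) ^ k) :
      s ∈ I ^ k :=
    Ideal.mem_of_quotientMap_injective (hquot k).1 (by rwa [Ideal.map_pow])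
  choose ψ hψ using exists_isAdicLimit hdense hclosed hcomplete.toIsPrecomplete hf
  have huniq {x y y' : S} (hy : IsAdicLimit I f c x y) (hy' : IsAdicLimit I f c x y') :
      y = y' :=
    hy.eq hdense hcomplete.toIsHausdorff hy'
  refine ⟨AddMonoidHom.mk' ψ fun x x' => huniq (hψ (x + x')) ((hψ x).add hdense (hψ x')),
    fun s => huniq (hψ _) (isAdicLimit_algebraMap hclosed hf s),
    fun t x => huniq (hψ _) ((hψ x).pow_mul hdense hclosed hf hq t)⟩

end AdicExtension

theorem uniformly_F_compatible_comap_completion_general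
    (R : Type u) [CommRing R] [IsNoetherianRing R] [IsLocalRing R]
    (p : ℕ) [Fact p.Prime] [CharP R p]
    (R' : Type u) [CommRing R'] [IsLocalRing R'] [CharP R' p]
    [Algebra R R']
    (hmax : maximalIdeal R' = (maximalIdeal R).map (algebraMap R R'))
    (hcomplete : IsAdicComplete (maximalIdeal R') R')
    (hquot : ∀ n : ℕ, Function.Bijective
      (Ideal.quotientMap ((maximalIdeal R ^ n).map (algebraMap R R')) (algebraMap R R')
        Ideal.le_comap_map))
    (𝔆 : Ideal R') (h𝔆 : UniformlyFCompatible R' p 𝔆) :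
    UniformlyFCompatible R p (𝔆.comap (algebraMap R R')) := by
  intro n hn φ b hb
  let f : R →+ R := φ.toAddMonoidHom
  have hf : ∀ a t, f (a ^ p ^ n * t) = a * f t := FrobAlg.map_of_pow_mul φ
  obtain ⟨c, hc⟩ :=
    exists_map_mem_pow_of_mem_pow_mul hf (IsNoetherian.noetherian (maximalIdeal R))
  obtain ⟨ψ, hψ, hψf⟩ :=
    exists_addMonoidHom_extension_pow_mul hquot (hmax ▸ hcomplete) hc hf
  show algebraMap R R' (f b) ∈ 𝔆
  rw [← hψ b]
  exact h𝔆 n hn (FrobAlg.linearMapOfPowMul ψ hψf) (algebraMap R R' b) hb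

theorem uniformly_F_compatible_comap_completion
    (R : Type u) [CommRing R] [IsNoetherianRing R] [IsLocalRing R]
    (p : ℕ) [Fact p.Prime] [CharP R p]
    (hFF : IsFFinite R p)
    (R' : Type u) [CommRing R'] [IsNoetherianRing R'] [IsLocalRing R'] [CharP R' p]
    [Algebra R R']
    (hmax : maximalIdeal R' = (maximalIdeal R).map (algebraMap R R'))
    (hcomplete : IsAdicComplete (maximalIdeal R') R')
    (hquot : ∀ n : ℕ, Function.Bijective
      (Ideal.quotientMap ((maximalIdeal R ^ n).map (algebraMap R R')) (algebraMap R R')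
        Ideal.le_comap_map))
    (𝔆 : Ideal R') (h𝔆 : UniformlyFCompatible R' p 𝔆) :
    UniformlyFCompatible R p (𝔆.comap (algebraMap R R')) :=
  uniformly_F_compatible_comap_completion_general R p R' hmax hcomplete hquot 𝔆 h𝔆
end
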